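/- arXiv:gr-qc/9608066 — 3 statements merged into one kernel-verified Lean document; each statement's English description precedes it below -/
import Mathlib

section
/- Let E₁,...,E_{n+m}, F₁,...,F_{n+m} be bounded operators on a complex Hilbert space H. Then Σ_{i=1}^{n+m} Eᵢ ⊗ Fᵢ = 0 on H ⊗ H if and only if there exists an (n+m)×(n+m) complex matrix [c_{ik}] such that Σ_{i=1}^{n+m} c_{ik} Eᵢ = 0 for each k, and Σ_{k=1}^{n+m} c_{ik} F_k = Fᵢ for each i. -/
open scoped InnerProductSpace ComplexOrder
open ContinuousLinearMap Filter

variable {H : Type*} [NormedAddCommGroup H] [InnerProductSpace ℂ H] [CompleteSpace H]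

/-- The rank-one orthogonal projection onto the line spanned by a unit vector `v`. -/
noncomputable def projLine (v : H) : H →L[ℂ] H := (innerSL ℂ v).smulRight v

/-- `p` is an orthogonal projection: self-adjoint and idempotent. -/
def IsProjn (p : H →L[ℂ] H) : Prop := IsSelfAdjoint p ∧ p ∘L p = p

/-- `P` is the sum of the family `p` in the weak operator topology. -/
def WOTSum {ι : Type*} (p : ι → H →L[ℂ] H) (P : H →L[ℂ] H) : Prop :=
  ∀ x y : H, HasSum (fun i => ⟪y, p i x⟫_ℂ) ⟪y, P x⟫_ℂ

/-- An abstract realization of the Hilbert-space tensor product `H ⊗ H` as a Hilbert space `K`,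
together with the tensor product of bounded operators. -/
structure HTensor (H K : Type*) [NormedAddCommGroup H] [InnerProductSpace ℂ H] [CompleteSpace H]
    [NormedAddCommGroup K] [InnerProductSpace ℂ K] [CompleteSpace K] where
  /-- the tensor product of vectors -/
  tv : H →ₗ[ℂ] H →ₗ[ℂ] K
  inner_tv : ∀ a b c d : H, ⟪tv a b, tv c d⟫_ℂ = ⟪a, c⟫_ℂ * ⟪b, d⟫_ℂ
  dense_span : (Submodule.span ℂ {z : K | ∃ a b, z = tv a b}).topologicalClosure = ⊤
  /-- the tensor product of bounded operators -/
  tp : (H →L[ℂ] H) → (H →L[ℂ] H) → (K →L[ℂ] K)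
  tp_tv : ∀ (A B : H →L[ℂ] H) (a b : H), tp A B (tv a b) = tv (A a) (B b)

/-- A bounded operator is trace class iff its diagonal is (absolutely) summable in every
orthonormal basis. -/
def IsTraceClass {K : Type*} [NormedAddCommGroup K] [InnerProductSpace ℂ K] [CompleteSpace K]
    (T : K →L[ℂ] K) : Prop :=
  ∀ {ι : Type*} (b : HilbertBasis ι ℂ K), Summable (fun i => ⟪b i, T (b i)⟫_ℂ)

/-- The trace of an operator computed along a fixed Hilbert basis (for trace-class operators this
is independent of the basis). -/
noncomputable def traceAlong {K : Type*} [NormedAddCommGroup K] [InnerProductSpace ℂ K]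
    [CompleteSpace K] {ι : Type*} (b : HilbertBasis ι ℂ K) (T : K →L[ℂ] K) : ℂ :=
  ∑' i, ⟪b i, T (b i)⟫_ℂ

variable {K : Type*} [NormedAddCommGroup K] [InnerProductSpace ℂ K] [CompleteSpace K]

/-- Kadison–Ringrose Proposition 11.1.8 (i): `Σ Eᵢ ⊗ Fᵢ = 0` iff there is a complex matrix
`c` with `Σᵢ c i k • Eᵢ = 0` for all `k` and `Σₖ c i k • F k = Fᵢ` for all `i`. -/
theorem sum_tensor_eq_zero_iff_matrix
    (T : HTensor H K) (n m : ℕ) (E F : Fin (n + m) → (H →L[ℂ] H)) :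
    (∑ i, T.tp (E i) (F i) = 0) ↔
      ∃ c : Matrix (Fin (n + m)) (Fin (n + m)) ℂ,
        (∀ k, ∑ i, c i k • E i = 0) ∧ (∀ i, ∑ k, c i k • F k = F i) := by
  constructor
  · intro h0
    -- key fact: for all a c, ∑ i, ⟪a, E i c⟫ • F i = 0
    have key : ∀ a v : H, ∑ i, ⟪a, E i v⟫_ℂ • F i = 0 := by
      intro a v
      ext d
      apply ext_inner_left ℂ
      intro b
      have h1 := congrArg (fun S : K →L[ℂ] K => ⟪T.tv a b, S (T.tv v d)⟫_ℂ) h0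
      simp only [ContinuousLinearMap.sum_apply, inner_sum, T.tp_tv, T.inner_tv,
        ContinuousLinearMap.zero_apply, inner_zero_right] at h1
      simpa [ContinuousLinearMap.sum_apply, ContinuousLinearMap.smul_apply,
        inner_sum, inner_smul_right] using h1
    -- the linear map sending coefficient vectors to combinations of the F's
    let L : (Fin (n + m) → ℂ) →ₗ[ℂ] (H →L[ℂ] H) :=
      { toFun := fun x => ∑ i, x i • F i
        map_add' := fun x y => by simp [add_smul, Finset.sum_add_distrib]
        map_smul' := fun z x => by simp [smul_smul, Finset.smul_sum]
      }
    have hF : ∀ i, F i ∈ LinearMap.range L := fun i =>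
      ⟨Pi.single i 1, by simp [L, Pi.single_apply]⟩
    obtain ⟨σ, hσ⟩ := L.rangeRestrict.exists_rightInverse_of_surjective L.range_rangeRestrict
    refine ⟨fun i k => σ ⟨F i, hF i⟩ k, fun k => ?_, fun i => ?_⟩
    · -- ∑ i, c i k • E i = 0
      ext v
      apply ext_inner_left ℂ
      intro a
      have hu : (∑ i, ⟪a, E i v⟫_ℂ • (⟨F i, hF i⟩ : LinearMap.range L)) = 0 := by
        apply Subtype.coe_injective
        push_cast
        simpa using key a v
      have h2 := congrArg (fun w => σ w k) hu
      simp only [map_sum, map_smul, map_zero] at h2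
      simpa [ContinuousLinearMap.sum_apply, ContinuousLinearMap.smul_apply,
        inner_sum, inner_smul_right, mul_comm] using h2
    · -- ∑ k, c i k • F k = F i
      have h2 := congrArg Subtype.val (LinearMap.congr_fun hσ ⟨F i, hF i⟩)
      simpa [L] using h2
  · rintro ⟨c, hc1, hc2⟩
    have hden : Dense ((Submodule.span ℂ {z : K | ∃ a b, z = T.tv a b}) : Set K) :=
      Submodule.dense_iff_topologicalClosure_eq_top.mpr T.dense_span
    refine ContinuousLinearMap.ext_on hden ?_
    rintro z ⟨a, b, rfl⟩
    simp only [ContinuousLinearMap.sum_apply, T.tp_tv, ContinuousLinearMap.zero_apply]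
    calc ∑ i, T.tv (E i a) (F i b)
        = ∑ i, ∑ k, c i k • T.tv (E i a) (F k b) := by
          refine Finset.sum_congr rfl fun i _ => ?_
          have hFi : F i b = ∑ k, c i k • (F k b) := by
            rw [← hc2 i]; simp
          rw [hFi, map_sum]
          simp
      _ = ∑ k, T.tv ((∑ i, c i k • E i) a) (F k b) := by
          rw [Finset.sum_comm]
          refine Finset.sum_congr rfl fun k _ => ?_
          simp [map_sum, Finset.sum_apply]
      _ = 0 := by simp [hc1]
end

section
/- Let H be a finite-dimensional complex Hilbert space of dimension n, and let D : B(H) × B(H) → ℂ be a bilinear functional bounded by K, i.e., |D(A,B)| ≤ K‖A‖‖B‖. Define, for a unit vector Ψ₀ = Σ_{j=1}^N κ_j φ_j ⊗ ψ_j in H ⊗ H (with φ_j, ψ_j unit vectors), d̂(P_{Ψ₀}) := Σ_{i,j=1}^N κ_i conj(κ_j) D(|φ_i⟩⟨φ_j|, |ψ_i⟩⟨ψ_j|). Then the extension d̂ to finite orthogonal sums of such rank-one projections is bounded by n⁴K. -/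
open scoped InnerProductSpace ComplexOrder
open ContinuousLinearMap Filter

variable {H : Type*} [NormedAddCommGroup H] [InnerProductSpace ℂ H] [CompleteSpace H]

variable {K : Type*} [NormedAddCommGroup K] [InnerProductSpace ℂ K] [CompleteSpace K]

/-- The rank-one operator `|a⟩⟨b| : x ↦ ⟨b, x⟩ a`. -/
noncomputable def ketBra {H : Type*} [NormedAddCommGroup H] [InnerProductSpace ℂ H]
    [CompleteSpace H] (a b : H) : H →L[ℂ] H := (innerSL ℂ b).smulRight a

/-- If `H` is `n`-dimensional and `D` is a bilinear functional bounded by `Kb`, then the induced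
extension `d̂` to finite orthogonal sums of rank-one projections on `H ⊗ H` is bounded
by `n⁴ · Kb`. -/
theorem extension_bounded_by_n4K
    [FiniteDimensional ℂ H] [FiniteDimensional ℂ K] {n : ℕ}
    (hn : Module.finrank ℂ H = n)
    (T : HTensor H K)
    (D : (H →L[ℂ] H) →ₗ[ℂ] (H →L[ℂ] H) →ₗ[ℂ] ℂ) (Kb : ℝ)
    (hD : ∀ A B : H →L[ℂ] H, ‖D A B‖ ≤ Kb * ‖A‖ * ‖B‖)
    (dhat : (K →L[ℂ] K) → ℂ)
    (hval : ∀ (N : ℕ) (κ : Fin N → ℂ) (φ ψ : Fin N → H) (Ψ0 : K), ‖Ψ0‖ = 1 →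
      (∀ j, ‖φ j‖ = 1) → (∀ j, ‖ψ j‖ = 1) →
      Ψ0 = ∑ j, κ j • T.tv (φ j) (ψ j) →
      dhat (projLine Ψ0) =
        ∑ i, ∑ j, κ i * (starRingEnd ℂ) (κ j) *
          D (ketBra (φ i) (φ j)) (ketBra (ψ i) (ψ j)))
    (hadd : ∀ (M : ℕ) (Ψ : Fin M → K), Orthonormal ℂ Ψ →
      dhat (∑ m, projLine (Ψ m)) = ∑ m, dhat (projLine (Ψ m))) :
    ∀ (M : ℕ) (Ψ : Fin M → K), Orthonormal ℂ Ψ →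
      ‖dhat (∑ m, projLine (Ψ m))‖ ≤ (n : ℝ) ^ 4 * Kb := by
  intro M Ψ hΨ
  classical
  -- orthonormal basis of H indexed by `Fin n`
  let e : OrthonormalBasis (Fin n) ℂ H := (stdOrthonormalBasis ℂ H).reindex (finCongr hn)
  -- the induced orthonormal family of tensors in K
  set g : Fin n × Fin n → K := fun p => T.tv (e p.1) (e p.2) with hg
  have he := orthonormal_iff_ite.mp e.orthonormal
  have hg_on : Orthonormal ℂ g := by
    rw [orthonormal_iff_ite]
    intro p q
    simp only [hg, T.inner_tv, he]
    by_cases ha : p.1 = q.1 <;> by_cases hb : p.2 = q.2 <;>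
      simp [Prod.ext_iff, ha, hb]
  have hspan : ⊤ ≤ Submodule.span ℂ (Set.range g) := by
    have h1 : Submodule.span ℂ {z : K | ∃ a b, z = T.tv a b} ≤
        Submodule.span ℂ (Set.range g) := by
      rw [Submodule.span_le]
      rintro z ⟨a, b, rfl⟩
      have ha : a = ∑ i, ⟪e i, a⟫_ℂ • e i := (e.sum_repr' a).symm
      have hb : b = ∑ i, ⟪e i, b⟫_ℂ • e i := (e.sum_repr' b).symm
      rw [ha, hb]
      simp only [map_sum, map_smul, LinearMap.sum_apply, LinearMap.smul_apply,
        SetLike.mem_coe]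
      exact Submodule.sum_mem _ fun i _ => Submodule.smul_mem _ _ <|
        Submodule.sum_mem _ fun j _ => Submodule.smul_mem _ _ <|
          Submodule.subset_span ⟨(j, i), rfl⟩
    have h2 := T.dense_span
    have h3 : (Submodule.span ℂ {z : K | ∃ a b, z = T.tv a b}).topologicalClosure ≤
        (Submodule.span ℂ (Set.range g)).topologicalClosure :=
      Submodule.topologicalClosure_mono h1
    rw [h2] at h3
    rwa [(Submodule.span ℂ (Set.range g)).closed_of_finiteDimensional.submodule_topologicalClosure_eq] at h3
  let B : OrthonormalBasis (Fin n × Fin n) ℂ K := OrthonormalBasis.mk hg_on hspan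
  have hK : Module.finrank ℂ K = n * n := by
    rw [Module.finrank_eq_card_basis B.toBasis]
    simp
  have hM : M ≤ n * n := by
    have h := hΨ.linearIndependent.fintype_card_le_finrank
    simpa [hK] using h
  rcases Nat.eq_zero_or_pos n with hn0 | hnpos
  · -- trivial case n = 0
    subst hn0
    interval_cases M
    rw [hadd 0 Ψ hΨ]
    simp
  -- now n ≥ 1 ; first, Kb ≥ 0
  have hket : ∀ a b : H, ‖a‖ = 1 → ‖b‖ = 1 → ‖ketBra a b‖ = 1 := by
    intro a b haa hbb
    rw [ketBra, ContinuousLinearMap.norm_smulRight_apply, innerSL_apply_norm, haa, hbb, one_mul]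
  have hKb : 0 ≤ Kb := by
    set v := e ⟨0, hnpos⟩ with hv
    have h1 : ‖ketBra v v‖ = 1 := hket v v (e.orthonormal.1 _) (e.orthonormal.1 _)
    have h2 := hD (ketBra v v) (ketBra v v)
    rw [h1] at h2
    have := norm_nonneg ((D (ketBra v v)) (ketBra v v))
    linarith
  -- per-term bound
  have key : ∀ m, ‖dhat (projLine (Ψ m))‖ ≤ (n : ℝ) ^ 2 * Kb := by
    intro m
    set σ : Fin (n * n) ≃ Fin n × Fin n := finProdFinEquiv.symm with hσ
    set κ : Fin (n * n) → ℂ := fun q => B.repr (Ψ m) (σ q) with hκ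
    have hrepr : Ψ m = ∑ q : Fin (n * n), κ q • T.tv (e (σ q).1) (e (σ q).2) := by
      have h1 := B.sum_repr (Ψ m)
      rw [← Equiv.sum_comp σ (fun p => B.repr (Ψ m) p • B p)] at h1
      rw [← h1]
      refine Finset.sum_congr rfl fun q _ => ?_
      simp [κ, B, OrthonormalBasis.coe_mk, g]
    have hval' := hval (n * n) κ (fun q => e (σ q).1) (fun q => e (σ q).2) (Ψ m)
      (hΨ.1 m) (fun q => e.orthonormal.1 _) (fun q => e.orthonormal.1 _) hrepr
    rw [hval']
    have hpar : ∑ q, ‖κ q‖ ^ 2 = 1 := by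
      have h1 : ‖B.repr (Ψ m)‖ = 1 := by
        rw [LinearIsometryEquiv.norm_map, hΨ.1 m]
      have h2 := EuclideanSpace.norm_eq (B.repr (Ψ m))
      rw [h1] at h2
      have h3 : ∑ p, ‖B.repr (Ψ m) p‖ ^ 2 = 1 := by
        have h4 : (0:ℝ) ≤ ∑ p, ‖B.repr (Ψ m) p‖ ^ 2 :=
          Finset.sum_nonneg fun _ _ => sq_nonneg _
        nlinarith [Real.sq_sqrt h4]
      rw [← h3]
      exact Equiv.sum_comp σ (fun p => ‖B.repr (Ψ m) p‖ ^ 2)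
    have hstep : ∀ i j : Fin (n * n),
        ‖κ i * (starRingEnd ℂ) (κ j) *
          D (ketBra (e (σ i).1) (e (σ j).1)) (ketBra (e (σ i).2) (e (σ j).2))‖ ≤
          ‖κ i‖ * ‖κ j‖ * Kb := by
      intro i j
      rw [norm_mul, norm_mul, RCLike.norm_conj]
      have hDb := hD (ketBra (e (σ i).1) (e (σ j).1)) (ketBra (e (σ i).2) (e (σ j).2))
      rw [hket _ _ (e.orthonormal.1 _) (e.orthonormal.1 _),
        hket _ _ (e.orthonormal.1 _) (e.orthonormal.1 _)] at hDb
      have : ‖(D (ketBra (e (σ i).1) (e (σ j).1))) (ketBra (e (σ i).2) (e (σ j).2))‖ ≤ Kb := by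
        simpa using hDb
      exact mul_le_mul_of_nonneg_left this (by positivity)
    calc ‖∑ i, ∑ j, κ i * (starRingEnd ℂ) (κ j) *
          D (ketBra (e (σ i).1) (e (σ j).1)) (ketBra (e (σ i).2) (e (σ j).2))‖
        ≤ ∑ i, ∑ j, ‖κ i‖ * ‖κ j‖ * Kb := by
          refine (norm_sum_le _ _).trans (Finset.sum_le_sum fun i _ =>
            (norm_sum_le _ _).trans (Finset.sum_le_sum fun j _ => hstep i j))
      _ = (∑ i, ‖κ i‖) ^ 2 * Kb := by
          rw [sq, Finset.sum_mul_sum, Finset.sum_mul]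
          refine Finset.sum_congr rfl fun i _ => ?_
          rw [Finset.sum_mul]
      _ ≤ ((n * n : ℕ) * ∑ q, ‖κ q‖ ^ 2) * Kb := by
          refine mul_le_mul_of_nonneg_right ?_ hKb
          have := sq_sum_le_card_mul_sum_sq (s := (Finset.univ : Finset (Fin (n*n))))
            (f := fun q => ‖κ q‖)
          simpa using this
      _ = (n : ℝ) ^ 2 * Kb := by
          rw [hpar]
          push_cast
          ring
  rw [hadd M Ψ hΨ]
  calc ‖∑ m, dhat (projLine (Ψ m))‖ ≤ ∑ m : Fin M, (n : ℝ) ^ 2 * Kb :=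
        (norm_sum_le _ _).trans (Finset.sum_le_sum fun m _ => key m)
    _ = M * ((n : ℝ) ^ 2 * Kb) := by simp [Finset.sum_const, mul_comm]
    _ ≤ (n * n : ℕ) * ((n : ℝ) ^ 2 * Kb) := by
        refine mul_le_mul_of_nonneg_right ?_ (by positivity)
        exact_mod_cast hM
    _ = (n : ℝ) ^ 4 * Kb := by push_cast; ring
end

section
/- Let H be a complex Hilbert space with dim H > 2 and d a bounded decoherence functional on P(H) that extends to a bounded bilinear functional D on B(H) × B(H) (continuous in each argument in operator norm). For a unit vector Ψ₀ ∈ H ⊗ H with two representations Ψ₀ = Σ_{j=1}^N κ_j φ_j ⊗ ψ_j = Σ_{j=1}^M μ_j φ'_j ⊗ ψ'_j as finite combinations of simple tensors, the values Σ_{i,j=1}^N κ_i conj(κ_j) D(|φ_i⟩⟨φ_j|, |ψ_i⟩⟨ψ_j|) and Σ_{i,j=1}^M μ_i conj(μ_j) D(|φ'_i⟩⟨φ'_j|, |ψ'_i⟩⟨ψ'_j|) coincide, so d̂(P_{Ψ₀}) is well-defined. -/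
open scoped InnerProductSpace ComplexOrder
open ContinuousLinearMap Filter

variable {H : Type*} [NormedAddCommGroup H] [InnerProductSpace ℂ H] [CompleteSpace H]

variable {K : Type*} [NormedAddCommGroup K] [InnerProductSpace ℂ K] [CompleteSpace K]

/-! By `inner_tv`, `T.tv` induces an isometric, hence injective, map out of the algebraic tensor
product `H ⊗[ℂ] H` with its inner product. Two representations of `Ψ₀` are therefore the same
algebraic tensor, on which every map that is semilinear in each factor takes one value. The double
sum is bilinear in `(φ i, ψ i)` for a fixed second pair and conjugate-bilinear in `(φ j, ψ j)` for
a fixed first pair, so the representation can be exchanged in one summation at a time. -/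

lemma ketBra_add_left (a a' b : H) : ketBra (a + a') b = ketBra a b + ketBra a' b := by
  ext x; simp [ketBra]

lemma ketBra_smul_left (t : ℂ) (a b : H) : ketBra (t • a) b = t • ketBra a b := by
  ext x; simp [ketBra, smul_comm t]

lemma ketBra_add_right (a b b' : H) : ketBra a (b + b') = ketBra a b + ketBra a b' := by
  ext x; simp [ketBra, add_smul]

lemma ketBra_smul_right (t : ℂ) (a b : H) :
    ketBra a (t • b) = (starRingEnd ℂ) t • ketBra a b := by
  ext x; simp [ketBra, smul_smul]

noncomputable def ketBraLeft (b : H) : H →ₗ[ℂ] H →L[ℂ] H where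
  toFun a := ketBra a b
  map_add' a a' := ketBra_add_left a a' b
  map_smul' t a := ketBra_smul_left t a b

@[simp]
lemma ketBraLeft_apply (a b : H) : ketBraLeft b a = ketBra a b := rfl

noncomputable def ketBraRight (a : H) : H →ₗ⋆[ℂ] H →L[ℂ] H where
  toFun b := ketBra a b
  map_add' b b' := ketBra_add_right a b b'
  map_smul' t b := ketBra_smul_right t a b

@[simp]
lemma ketBraRight_apply (a b : H) : ketBraRight a b = ketBra a b := rfl

open scoped TensorProduct

namespace HTensor

variable (T : HTensor H K)

noncomputable def lift : H ⊗[ℂ] H →ₗ[ℂ] K := TensorProduct.lift T.tv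

lemma inner_lift_lift (x y : H ⊗[ℂ] H) : ⟪T.lift x, T.lift y⟫_ℂ = ⟪x, y⟫_ℂ := by
  induction x using TensorProduct.induction_on with
  | zero => simp
  | add x x' hx hx' => simp [inner_add_left, hx, hx']
  | tmul a b =>
    induction y using TensorProduct.induction_on with
    | zero => simp
    | add y y' hy hy' => simp [inner_add_right, hy, hy']
    | tmul c d => simp [lift, T.inner_tv]

lemma lift_injective : Function.Injective T.lift :=
  (T.lift.isometryOfInner T.inner_lift_lift).injective

theorem sum_smul_apply_eq_of_sum_smul_tv_eq {ι ι' R M : Type*} [Fintype ι] [Fintype ι']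
    [CommSemiring R] [AddCommMonoid M] [Module R M] {σ : ℂ →+* R} (B : H →ₛₗ[σ] H →ₛₗ[σ] M)
    {c : ι → ℂ} {a b : ι → H} {c' : ι' → ℂ} {a' b' : ι' → H}
    (h : ∑ i, c i • T.tv (a i) (b i) = ∑ j, c' j • T.tv (a' j) (b' j)) :
    ∑ i, σ (c i) • B (a i) (b i) = ∑ j, σ (c' j) • B (a' j) (b' j) := by
  have htmul : ∑ i, c i • a i ⊗ₜ[ℂ] b i = ∑ j, c' j • a' j ⊗ₜ[ℂ] b' j :=
    T.lift_injective (by simpa [lift] using h)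
  simpa using congrArg (TensorProduct.lift B) htmul

end HTensor

theorem Finset.sum_sum_mul_mul_eq_of_sum_mul_eq {ι ι' α R : Type*} [Fintype ι] [Fintype ι']
    [CommSemiring R] (F : α → α → R) {a b : ι → R} {p : ι → α} {a' b' : ι' → R} {p' : ι' → α}
    (hleft : ∀ y, ∑ i, a i * F (p i) y = ∑ i, a' i * F (p' i) y)
    (hright : ∀ x, ∑ j, b j * F x (p j) = ∑ j, b' j * F x (p' j)) :
    ∑ i, ∑ j, a i * b j * F (p i) (p j) = ∑ i, ∑ j, a' i * b' j * F (p' i) (p' j) := by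
  calc ∑ i, ∑ j, a i * b j * F (p i) (p j)
      = ∑ i, a i * ∑ j, b' j * F (p i) (p' j) := by
        simp_rw [← hright, Finset.mul_sum, mul_assoc]
    _ = ∑ j, b' j * ∑ i, a i * F (p i) (p' j) := by
        simp_rw [Finset.mul_sum, mul_left_comm (a _)]
        exact Finset.sum_comm
    _ = ∑ i, ∑ j, a' i * b' j * F (p' i) (p' j) := by
        simp_rw [hleft, Finset.mul_sum, mul_left_comm (b' _), mul_assoc]
        exact Finset.sum_comm

theorem dhat_well_defined_general
    (T : HTensor H K)
    (D : (H →L[ℂ] H) →ₗ[ℂ] (H →L[ℂ] H) →ₗ[ℂ] ℂ)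
    (Ψ0 : K)
    {N M : ℕ} (κ : Fin N → ℂ) (φ ψ : Fin N → H) (μ : Fin M → ℂ) (φ' ψ' : Fin M → H)
    (hrep1 : Ψ0 = ∑ j, κ j • T.tv (φ j) (ψ j))
    (hrep2 : Ψ0 = ∑ j, μ j • T.tv (φ' j) (ψ' j)) :
    ∑ i, ∑ j, κ i * (starRingEnd ℂ) (κ j) *
        D (ketBra (φ i) (φ j)) (ketBra (ψ i) (ψ j)) =
      ∑ i, ∑ j, μ i * (starRingEnd ℂ) (μ j) *
        D (ketBra (φ' i) (φ' j)) (ketBra (ψ' i) (ψ' j)) := by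
  have hrep := hrep1.symm.trans hrep2
  refine Finset.sum_sum_mul_mul_eq_of_sum_mul_eq (a := κ) (b := fun j => (starRingEnd ℂ) (κ j))
    (a' := μ) (b' := fun j => (starRingEnd ℂ) (μ j))
    (p := fun i => (φ i, ψ i)) (p' := fun i => (φ' i, ψ' i))
    (fun x y => D (ketBra x.1 y.1) (ketBra x.2 y.2)) (fun y => ?_) (fun x => ?_)
  · simpa using T.sum_smul_apply_eq_of_sum_smul_tv_eq
      ((D.comp (ketBraLeft y.1)).compl₂ (ketBraLeft y.2)) hrep
  · simpa using T.sum_smul_apply_eq_of_sum_smul_tv_eq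
      ((D.comp (ketBraRight x.1)).compl₂ (ketBraRight x.2)) hrep

/-- Well-definedness of `d̂(P_{Ψ₀})`: two representations of the same unit vector
`Ψ₀ ∈ H ⊗ H` as finite combinations of simple tensors yield the same value of the double sum
built from a bounded bilinear extension `D` of a bounded decoherence functional. -/
theorem dhat_well_defined
    (hdim : 2 < Module.rank ℂ H)
    (T : HTensor H K)
    (d : (H →L[ℂ] H) → (H →L[ℂ] H) → ℂ)
    (D : (H →L[ℂ] H) →ₗ[ℂ] (H →L[ℂ] H) →ₗ[ℂ] ℂ) (Kb : ℝ)
    (hD : ∀ A B : H →L[ℂ] H, ‖D A B‖ ≤ Kb * ‖A‖ * ‖B‖)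
    (hDd : ∀ h k, IsProjn h → IsProjn k → D h k = d h k)
    (Ψ0 : K) (hΨ0 : ‖Ψ0‖ = 1)
    {N M : ℕ} (κ : Fin N → ℂ) (φ ψ : Fin N → H) (μ : Fin M → ℂ) (φ' ψ' : Fin M → H)
    (hφ : ∀ j, ‖φ j‖ = 1) (hψ : ∀ j, ‖ψ j‖ = 1)
    (hφ' : ∀ j, ‖φ' j‖ = 1) (hψ' : ∀ j, ‖ψ' j‖ = 1)
    (hrep1 : Ψ0 = ∑ j, κ j • T.tv (φ j) (ψ j))
    (hrep2 : Ψ0 = ∑ j, μ j • T.tv (φ' j) (ψ' j)) :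
    ∑ i, ∑ j, κ i * (starRingEnd ℂ) (κ j) *
        D (ketBra (φ i) (φ j)) (ketBra (ψ i) (ψ j)) =
      ∑ i, ∑ j, μ i * (starRingEnd ℂ) (μ j) *
        D (ketBra (φ' i) (φ' j)) (ketBra (ψ' i) (ψ' j)) :=
  dhat_well_defined_general T D Ψ0 κ φ ψ μ φ' ψ' hrep1 hrep2
end
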